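/- arXiv:1409.5462 — 5 statements merged into one kernel-verified Lean document; each statement's English description precedes it below -/
import Mathlib

section
/- Let K be a field, F ∈ K[x]^{m×n}, and U = [U_L, U_R] ∈ K[x]^{n×n} a unimodular matrix such that F·U = [0, T] with T of full column rank, F·U_L = 0 and F·U_R = T. If N is any other kernel basis of F, then the matrix U* = [N, U_R] is unimodular and also satisfies F·U* = [0, T]. -/
/-!
Since `U` is unimodular and `F * U_R = T` has independent columns, `U_L` is itself a kernel
basis of `F`: writing a kernel vector as `U * v`, the `U_R`-coordinates of `v` are killed by `T`.
Two kernel bases `N`, `U_L` factor through each other, `N = U_L * A` and `U_L = N * B`, and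
independence of their columns makes `A`, `B` mutually inverse. Hence `k = p` and
`U* = U * diag(A, 1)` is unimodular.
-/

open Polynomial Matrix

/-- `N` is a (right) kernel basis of `F`. -/
def IsKernelBasis {K : Type*} [Field K] {m n k : ℕ}
    (F : Matrix (Fin m) (Fin n) K[X]) (N : Matrix (Fin n) (Fin k) K[X]) : Prop :=
  LinearIndependent K[X] Nᵀ ∧
  F * N = 0 ∧
  ∀ q : Fin n → K[X], F.mulVec q = 0 → ∃ p : Fin k → K[X], q = N.mulVec p

namespace Matrix

theorem exists_ne_zero_det_eq_C_iff_isUnit {K : Type*} [Field K] {n : Type*} [Fintype n]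
    [DecidableEq n] (M : Matrix n n K[X]) :
    (∃ c : K, c ≠ 0 ∧ M.det = C c) ↔ IsUnit M := by
  simp only [isUnit_iff_isUnit_det, Polynomial.isUnit_iff, isUnit_iff_ne_zero, eq_comm]

variable {R : Type*} [CommRing R] {m n p r : Type*}

theorem eq_of_mul_eq_mul_of_linearIndependent [Fintype p] {k : Type*} [Fintype k] [DecidableEq k]
    {N : Matrix n p R} (hN : LinearIndependent R Nᵀ) {A B : Matrix p k R} (h : N * A = N * B) :
    A = B :=
  ext_of_mulVec_single fun _ ↦ mulVec_injective_iff.2 hN <| by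
    rw [mulVec_mulVec, mulVec_mulVec, h]

section ColumnSplit

variable [Fintype n] {U : Matrix n n R} {e : p ⊕ r ≃ n} {L : Matrix n p R} {M : Matrix n r R}

theorem mulVec_eq_add_of_submatrix_eq_fromCols [Fintype p] [Fintype r]
    (h : U.submatrix id e = fromCols L M) (v : n → R) :
    U *ᵥ v = L *ᵥ (v ∘ e ∘ Sum.inl) + M *ᵥ (v ∘ e ∘ Sum.inr) := by
  rw [← fromCols_mulVec_sumElim, ← h, submatrix_mulVec_equiv, ← Function.comp_assoc,
    ← Function.comp_assoc, Sum.elim_comp_inl_inr, Function.comp_assoc, e.self_comp_symm]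
  rfl

variable [DecidableEq n]

theorem linearIndependent_of_submatrix_eq_fromCols (hU : IsUnit U)
    (h : U.submatrix id e = fromCols L M) : LinearIndependent R Lᵀ := by
  have hL : L = U.submatrix id (e ∘ Sum.inl) := by
    ext i j
    simpa using (congrFun (congrFun h i) (Sum.inl j)).symm
  subst hL
  exact (linearIndependent_cols_of_isUnit hU).comp _ (e.injective.comp Sum.inl_injective)

theorem exists_eq_mulVec_of_mulVec_eq_zero [Fintype p] [Fintype r] (hU : IsUnit U)
    (h : U.submatrix id e = fromCols L M) {F : Matrix m n R} (hL : F * L = 0)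
    (hM : LinearIndependent R (F * M)ᵀ) {q : n → R} (hq : F *ᵥ q = 0) : ∃ w, q = L *ᵥ w := by
  obtain ⟨v, rfl⟩ := mulVec_surjective_iff_isUnit.2 hU q
  rw [mulVec_eq_add_of_submatrix_eq_fromCols h] at hq ⊢
  have hvM : v ∘ e ∘ Sum.inr = 0 :=
    mulVec_injective_iff.2 hM <| by simpa [mulVec_add, mulVec_mulVec, hL] using hq
  exact ⟨v ∘ e ∘ Sum.inl, by simp [hvM]⟩

theorem isUnit_of_submatrix_eq_fromCols_mul [Fintype p] [DecidableEq p] [Fintype r]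
    [DecidableEq r] (hU : IsUnit U) (h : U.submatrix id e = fromCols L M) {A : Matrix p p R}
    (hA : IsUnit A) {V : Matrix n n R} (hV : V.submatrix id e = fromCols (L * A) M) :
    IsUnit V := by
  have hVU : V.submatrix e e = U.submatrix e e * fromBlocks A 0 0 1 := by
    have hVU' : V.submatrix id e =
        U.submatrix id e * (fromBlocks A 0 0 1 : Matrix (p ⊕ r) (p ⊕ r) R) := by
      rw [hV, h, fromCols_mul_fromBlocks]
      simp
    change (V.submatrix id e).submatrix e id = _
    rw [hVU', submatrix_mul _ _ _ id _ Function.bijective_id, submatrix_id_id, submatrix_submatrix]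
    rfl
  rw [← isUnit_submatrix_equiv e e, hVU]
  refine (isUnit_submatrix_equiv e e |>.2 hU).mul ?_
  rwa [isUnit_iff_isUnit_det, det_fromBlocks_zero₂₁, det_one, mul_one, ← isUnit_iff_isUnit_det]

end ColumnSplit

end Matrix

namespace IsKernelBasis

variable {K : Type*} [Field K] {m n k p : ℕ} {F : Matrix (Fin m) (Fin n) K[X]}
  {N : Matrix (Fin n) (Fin k) K[X]}

theorem exists_mul_eq (hN : IsKernelBasis F N) {M : Matrix (Fin n) (Fin p) K[X]}
    (hM : F * M = 0) : ∃ A : Matrix (Fin k) (Fin p) K[X], N * A = M := by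
  have hcol : ∀ j, ∃ w, M *ᵥ Pi.single j 1 = N *ᵥ w := fun _ ↦
    hN.2.2 _ (by rw [mulVec_mulVec, hM, zero_mulVec])
  choose w hw using hcol
  refine ⟨of fun i j ↦ w j i, ext_of_mulVec_single fun j ↦ ?_⟩
  rw [← mulVec_mulVec, mulVec_single_one, hw]
  rfl

theorem exists_mul_eq_one (hN : IsKernelBasis F N) {M : Matrix (Fin n) (Fin p) K[X]}
    (hM : IsKernelBasis F M) :
    ∃ (A : Matrix (Fin k) (Fin p) K[X]) (B : Matrix (Fin p) (Fin k) K[X]),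
      N * A = M ∧ A * B = 1 ∧ B * A = 1 := by
  obtain ⟨A, hA⟩ := hN.exists_mul_eq hM.2.1
  obtain ⟨B, hB⟩ := hM.exists_mul_eq hN.2.1
  refine ⟨A, B, hA, eq_of_mul_eq_mul_of_linearIndependent hN.1 ?_,
    eq_of_mul_eq_mul_of_linearIndependent hM.1 ?_⟩
  · rw [← Matrix.mul_assoc, hA, hB, Matrix.mul_one]
  · rw [← Matrix.mul_assoc, hB, hA, Matrix.mul_one]

theorem card_eq (hN : IsKernelBasis F N) {M : Matrix (Fin n) (Fin p) K[X]}
    (hM : IsKernelBasis F M) : k = p := by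
  obtain ⟨A, B, -, hAB, hBA⟩ := hN.exists_mul_eq_one hM
  simpa using square_of_invertible A B hAB hBA

theorem exists_isUnit_mul_eq (hN : IsKernelBasis F N) {M : Matrix (Fin n) (Fin k) K[X]}
    (hM : IsKernelBasis F M) : ∃ A : Matrix (Fin k) (Fin k) K[X], IsUnit A ∧ N * A = M := by
  obtain ⟨A, B, hA, hAB, hBA⟩ := hN.exists_mul_eq_one hM
  exact ⟨A, ⟨⟨A, B, hAB, hBA⟩, rfl⟩, hA⟩

theorem of_submatrix_eq_fromCols {r : ℕ} {U : Matrix (Fin n) (Fin n) K[X]}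
    {e : Fin k ⊕ Fin r ≃ Fin n} {M : Matrix (Fin n) (Fin r) K[X]} (hU : IsUnit U)
    (h : U.submatrix id e = fromCols N M) (hN : F * N = 0)
    (hM : LinearIndependent K[X] (F * M)ᵀ) : IsKernelBasis F N :=
  ⟨linearIndependent_of_submatrix_eq_fromCols hU h, hN,
    fun _ hq ↦ exists_eq_mulVec_of_mulVec_eq_zero hU h hN hM hq⟩

end IsKernelBasis

/-- Let `U = [U_L, U_R]` be unimodular with `F * U = [0, T]`,
`T` of full column rank (so `F * U_L = 0`, `F * U_R = T`, `U_L` being the first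
`p` columns of `U` and `U_R` the last `r`). If `N` is any other kernel basis of
`F` (with, necessarily, `k = p` columns), then `U* = [N, U_R]` is unimodular and
also satisfies `F * U* = [0, T]`. -/
theorem replace_kernel_basis_in_unimodular_transformation
    {K : Type*} [Field K] {m p r k : ℕ}
    (F : Matrix (Fin m) (Fin (p + r)) K[X])
    (U : Matrix (Fin (p + r)) (Fin (p + r)) K[X])
    (hU : ∃ c : K, c ≠ 0 ∧ U.det = Polynomial.C c)
    (T : Matrix (Fin m) (Fin r) K[X])
    (hT : LinearIndependent K[X] Tᵀ)
    (hL : F * U.submatrix id (Fin.castAdd r) = 0)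
    (hR : F * U.submatrix id (Fin.natAdd p) = T)
    (N : Matrix (Fin (p + r)) (Fin k) K[X])
    (hN : IsKernelBasis F N) :
    ∃ h : k = p,
      -- `U* = [N, U_R]`, written as a `(p+r) × (p+r)` matrix
      ∀ Ustar : Matrix (Fin (p + r)) (Fin (p + r)) K[X],
        Ustar = (Matrix.fromCols (N.submatrix id (Fin.cast h.symm))
            (U.submatrix id (Fin.natAdd p))).submatrix id finSumFinEquiv.symm →
        (∃ c : K, c ≠ 0 ∧ Ustar.det = Polynomial.C c) ∧
        F * Ustar.submatrix id (Fin.castAdd r) = 0 ∧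
        F * Ustar.submatrix id (Fin.natAdd p) = T := by
  rw [exists_ne_zero_det_eq_C_iff_isUnit] at hU
  set UL := U.submatrix id (Fin.castAdd r)
  set UR := U.submatrix id (Fin.natAdd p)
  have hUsplit : U.submatrix id finSumFinEquiv = fromCols UL UR := by
    ext i (j | j) <;> simp [UL, UR]
  have hUL : IsKernelBasis F UL := .of_submatrix_eq_fromCols hU hUsplit hL (hR ▸ hT)
  obtain rfl := hN.card_eq hUL
  obtain ⟨A, hA, hULA⟩ := hUL.exists_isUnit_mul_eq hN
  refine ⟨rfl, fun Ustar hUstar ↦ ?_⟩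
  have hUstar_split : Ustar.submatrix id finSumFinEquiv = fromCols (UL * A) UR := by
    ext i (j | j) <;> simp [hUstar, hULA]
  refine ⟨(exists_ne_zero_det_eq_C_iff_isUnit _).2 <|
    isUnit_of_submatrix_eq_fromCols_mul hU hUsplit hA hUstar_split, ?_, ?_⟩
  · convert hN.2.1 using 2
    ext i j
    simp [hUstar]
  · convert hR using 2
    ext i j
    simp [hUstar]
end

section
/- Let K be a field and F ∈ K[x]^{n×n} nonsingular, partitioned as F = [F_U; F_D] with F_U the top k rows and F_D the bottom n−k rows. Suppose G_1 ∈ K[x]^{k×k} is a column basis of F_U and N ∈ K[x]^{n×(n−k)} is a kernel basis of F_U. Then there exists a unimodular matrix U ∈ K[x]^{n×n} whose last n−k columns equal N such that F·U = [[G_1, 0], [*, G_2]] is block lower triangular with diagonal blocks G_1 and G_2 = F_D·N; moreover G_1 and G_2 are square and nonsingular. -/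
/-! Since `G₁` is a column basis of `F_U`, there are `P`, `Q` with `G₁ = F_U P` and
`F_U = G₁ Q`. Then `F_U (P Q - 1) = 0`, so `P Q - 1 = N T` for the kernel basis `N`, and
`U = [P | N]` has the right inverse `[Q; -T]`, hence is unimodular. Now
`F U = [[G₁, 0], [*, F_D N]]`, and `det G₁ · det (F_D N) = det F · det U ≠ 0`. -/

open Polynomial Matrix

/-- `T` is a column basis of `F`. -/
def IsColumnBasis {K : Type*} [Field K] {m n r : ℕ}
    (F : Matrix (Fin m) (Fin n) K[X]) (T : Matrix (Fin m) (Fin r) K[X]) : Prop :=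
  LinearIndependent K[X] Tᵀ ∧
  (∀ q : Fin r → K[X], ∃ p : Fin n → K[X], T.mulVec q = F.mulVec p) ∧
  (∀ p : Fin n → K[X], ∃ q : Fin r → K[X], F.mulVec p = T.mulVec q)

namespace Matrix

variable {R : Type*} [CommRing R] {m n r s : Type*} [Fintype n] [Fintype r]

theorem exists_eq_mul_of_forall_mulVec {A : Matrix m r R} {B : Matrix m n R}
    (h : ∀ q, ∃ p, A *ᵥ q = B *ᵥ p) : ∃ P : Matrix n r R, A = B * P := by
  classical
  choose p hp using fun j : r => h (Pi.single j 1)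
  refine ⟨(of p)ᵀ, ext fun i j => ?_⟩
  exact (mulVec_single_one A j ▸ congrFun (hp j) i :)

theorem exists_fromCols_mul_eq_one [Fintype s] [DecidableEq n] {FU : Matrix m n R}
    {P : Matrix n r R} {Q : Matrix r n R} {N : Matrix n s R} (hPQ : FU * P * Q = FU)
    (hN : ∀ q, FU *ᵥ q = 0 → ∃ p, q = N *ᵥ p) :
    ∃ W : Matrix (r ⊕ s) n R, fromCols P N * W = 1 := by
  have hker : ∀ q, ∃ p, (P * Q - 1) *ᵥ q = N *ᵥ p := fun q =>
    hN _ (by rw [mulVec_mulVec, Matrix.mul_sub, ← Matrix.mul_assoc, hPQ, Matrix.mul_one, sub_self,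
      zero_mulVec])
  obtain ⟨T, hT⟩ := exists_eq_mul_of_forall_mulVec hker
  exact ⟨fromRows Q (-T), by rw [fromCols_mul_fromRows, Matrix.mul_neg, ← hT]; abel⟩

theorem det_eq_mul_det_of_submatrix_castAdd_natAdd_eq_zero {k l : ℕ}
    {M : Matrix (Fin (k + l)) (Fin (k + l)) R}
    (h : M.submatrix (Fin.castAdd l) (Fin.natAdd k) = 0) :
    M.det = (M.submatrix (Fin.castAdd l) (Fin.castAdd l)).det *
      (M.submatrix (Fin.natAdd k) (Fin.natAdd k)).det := by
  have hblocks : M.submatrix finSumFinEquiv finSumFinEquiv = fromBlocks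
      (M.submatrix (Fin.castAdd l) (Fin.castAdd l)) 0
      (M.submatrix (Fin.natAdd k) (Fin.castAdd l)) (M.submatrix (Fin.natAdd k) (Fin.natAdd k)) := by
    rw [← h]
    ext (i | i) (j | j) <;> simp
  rw [← det_submatrix_equiv_self finSumFinEquiv, hblocks, det_fromBlocks_zero₁₂]

end Matrix

/-- Let `F` be nonsingular of size `(k+l) × (k+l)`, partitioned as
`F = [F_U; F_D]` with `F_U` the top `k` rows and `F_D` the bottom `l` rows.  If
`G₁` is a (square) column basis of `F_U` and `N` a kernel basis of `F_U`, then
there is a unimodular `U` whose last `l` columns equal `N` such that `F * U` is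
block lower triangular with diagonal blocks `G₁` and `G₂ = F_D * N`; moreover
`G₁` and `G₂` are (square and) nonsingular. -/
theorem exists_unimodular_block_triangularization
    {K : Type*} [Field K] {k l : ℕ}
    (F : Matrix (Fin (k + l)) (Fin (k + l)) K[X]) (hF : F.det ≠ 0)
    (G1 : Matrix (Fin k) (Fin k) K[X])
    (hG1 : IsColumnBasis (F.submatrix (Fin.castAdd l) id) G1)
    (N : Matrix (Fin (k + l)) (Fin l) K[X])
    (hN : IsKernelBasis (F.submatrix (Fin.castAdd l) id) N) :
    ∃ U : Matrix (Fin (k + l)) (Fin (k + l)) K[X],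
      (∃ c : K, c ≠ 0 ∧ U.det = Polynomial.C c) ∧
      U.submatrix id (Fin.natAdd k) = N ∧
      (F * U).submatrix (Fin.castAdd l) (Fin.castAdd l) = G1 ∧
      (F * U).submatrix (Fin.castAdd l) (Fin.natAdd k) = 0 ∧
      (F * U).submatrix (Fin.natAdd k) (Fin.natAdd k) =
        F.submatrix (Fin.natAdd k) id * N ∧
      G1.det ≠ 0 ∧ (F.submatrix (Fin.natAdd k) id * N).det ≠ 0 := by
  obtain ⟨-, hG1FU, hFUG1⟩ := hG1
  obtain ⟨-, hFUN, hker⟩ := hN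
  obtain ⟨P, hP⟩ := exists_eq_mul_of_forall_mulVec hG1FU
  obtain ⟨Q, hQ⟩ := exists_eq_mul_of_forall_mulVec hFUG1
  obtain ⟨W, hW⟩ := exists_fromCols_mul_eq_one (by rw [← hP, ← hQ]) hker
  set U := (fromCols P N).submatrix id finSumFinEquiv.symm
  have hU : IsUnit U.det := isUnit_det_of_right_inverse
    (B := W.submatrix finSumFinEquiv.symm id) (by rw [submatrix_mul_equiv, hW, submatrix_id_id])
  obtain ⟨c, hc, hUc⟩ := Polynomial.isUnit_iff.mp hU
  have hUN : U.submatrix id (Fin.natAdd k) = N := by ext; simp [U]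
  have h11 : (F * U).submatrix (Fin.castAdd l) (Fin.castAdd l) = G1 := by
    rw [submatrix_mul _ _ _ _ _ Function.bijective_id, hP]; congr 1; ext; simp [U]
  have h12 : (F * U).submatrix (Fin.castAdd l) (Fin.natAdd k) = 0 := by
    rw [submatrix_mul _ _ _ _ _ Function.bijective_id, hUN, hFUN]
  have h22 : (F * U).submatrix (Fin.natAdd k) (Fin.natAdd k) =
      F.submatrix (Fin.natAdd k) id * N := by
    rw [submatrix_mul _ _ _ _ _ Function.bijective_id, hUN]
  have hdet : G1.det * (F.submatrix (Fin.natAdd k) id * N).det ≠ 0 := by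
    rw [← h11, ← h22, ← det_eq_mul_det_of_submatrix_castAdd_natAdd_eq_zero h12, det_mul]
    exact mul_ne_zero hF hU.ne_zero
  exact ⟨U, ⟨c, hc.ne_zero, hUc.symm⟩, hUN, h11, h12, h22,
    left_ne_zero_of_mul hdet, right_ne_zero_of_mul hdet⟩
end

section
/- Let K be a field, F ∈ K[x]^{n×n} nonsingular with column degrees s = (s_1,...,s_n), partitioned as F = [F_U; F_D] with F_U the top k rows. Let N be an s-minimal kernel basis of F_U and set G_2 = F_D·N. Then the sum of the column degrees of G_2 is at most s_1 + ... + s_n. -/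
open Polynomial Matrix

/-- The column degree of a column vector `v`: the maximum of the degrees of its entries. -/
def colDeg {K : Type*} [Field K] {m : ℕ} (v : Fin m → K[X]) : WithBot ℕ :=
  Finset.univ.sup fun i => (v i).degree

/-- The `s`-shifted column degree of a column vector `v`: `max_i (deg (v i) + s i)`. -/
def sColDeg {K : Type*} [Field K] {n : ℕ} (s : Fin n → ℕ) (v : Fin n → K[X]) : WithBot ℕ :=
  Finset.univ.sup fun i => (v i).degree + (s i : WithBot ℕ)

/-- The `s`-shifted leading coefficient matrix of `N`. -/
def sLeadingCoeffMatrix {K : Type*} [Field K] {n k : ℕ} (s : Fin n → ℕ)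
    (N : Matrix (Fin n) (Fin k) K[X]) : Matrix (Fin n) (Fin k) K :=
  fun i j =>
    if (N i j).degree + (s i : WithBot ℕ) = sColDeg s (Nᵀ j) then (N i j).leadingCoeff else 0

/-- `N` is `s`-column reduced: its `s`-shifted leading coefficient matrix has
full column rank over `K`. -/
def IsSColumnReduced {K : Type*} [Field K] {n k : ℕ} (s : Fin n → ℕ)
    (N : Matrix (Fin n) (Fin k) K[X]) : Prop :=
  LinearIndependent K (sLeadingCoeffMatrix s N)ᵀ

/-!
Let `t j` be the `s`-column degree of the `j`-th column of `N`. As `deg F i m ≤ s m`, the `j`-th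
column of `G₂ = F_D * N` has degree at most `t j`, so it suffices to show `∑ t ≤ ∑ s`.

Pick rows `r` of `N` on which the `s`-leading coefficient matrix of `N` is invertible, and let `c`
be the complementary columns of `F`. Multiplying `F` (columns ordered as `c, r`) by
`[1, N_c; 0, N_r]` gives the block triangular `[A, 0; *, G₂]` with `A = F_U` restricted to `c`, so
`det F * det N_r = ± det A * det G₂`. Column reducedness gives `deg det N_r = ∑ t - ∑_r s`, clearly
`deg det A ≤ ∑_c s`, and `det G₂ ∣ det F` because the maximal minors of a kernel basis generate
the unit ideal: a kernel basis keeps full rank modulo every maximal ideal of `K[X]`.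
-/

namespace Polynomial

variable {R : Type*} [CommSemiring R]

theorem coeff_prod_sum_of_natDegree_le {ι : Type*} (s : Finset ι) (p : ι → R[X]) (d : ι → ℕ)
    (h : ∀ i ∈ s, (p i).natDegree ≤ d i) :
    (∏ i ∈ s, p i).coeff (∑ i ∈ s, d i) = ∏ i ∈ s, (p i).coeff (d i) := by
  classical
  induction s using Finset.induction_on with
  | empty => simp
  | insert a s ha ih =>
    simp only [Finset.forall_mem_insert] at h
    rw [Finset.prod_insert ha, Finset.sum_insert ha, Finset.prod_insert ha,
      coeff_mul_add_eq_of_natDegree_le h.1 ((natDegree_prod_le _ _).trans (Finset.sum_le_sum h.2)),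
      ih h.2]

end Polynomial

namespace Matrix

theorem exists_det_submatrix_ne_zero {K : Type*} [Field K] {m n : Type*} [Fintype m]
    [Fintype n] [DecidableEq n] (M : Matrix m n K) (h : LinearIndependent K Mᵀ) :
    ∃ r : n ↪ m, (M.submatrix r id).det ≠ 0 := by
  have hspan : Submodule.span K (Set.range M.row) = ⊤ := by
    refine Submodule.eq_top_of_finrank_eq ?_
    rw [← rank_eq_finrank_span_row, ← rank_transpose, LinearIndependent.rank_matrix (M := Mᵀ) h,
      Module.finrank_fintype_fun_eq_card]
  obtain ⟨κ, a, ha, hspan_a, hli⟩ := exists_linearIndependent' K M.row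
  have : Fintype κ := Fintype.ofInjective a ha
  have hcard : Fintype.card n = Fintype.card κ := by
    rw [linearIndependent_iff_card_eq_finrank_span.1 hli, Set.finrank, hspan_a, hspan,
      finrank_top, Module.finrank_fintype_fun_eq_card]
  let e := Fintype.equivOfCardEq hcard
  refine ⟨⟨a ∘ e, ha.comp e.injective⟩, ?_⟩
  have hrows : LinearIndependent K (M.submatrix (a ∘ e) id).row := hli.comp e e.injective
  exact ((isUnit_iff_isUnit_det _).1 (linearIndependent_rows_iff_isUnit.1 hrows)).ne_zero

variable {R : Type*} [CommRing R]

theorem det_mul_det_toRows₂_of_toRows₁_mul_eq_zero {m₁ m₂ : Type*} [Fintype m₁] [Fintype m₂]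
    [DecidableEq m₁] [DecidableEq m₂] (A : Matrix (m₁ ⊕ m₂) (m₁ ⊕ m₂) R)
    (N : Matrix (m₁ ⊕ m₂) m₂ R) (hAN : (A * N).toRows₁ = 0) :
    A.det * N.toRows₂.det = A.toBlocks₁₁.det * (A * N).toRows₂.det := by
  have hAC : A * fromBlocks 1 N.toRows₁ 0 N.toRows₂ =
      fromBlocks A.toBlocks₁₁ (A * N).toRows₁ A.toBlocks₂₁ (A * N).toRows₂ := by
    ext (i | i) (j | j) <;>
      simp [mul_apply, Fintype.sum_sum_type, fromBlocks, toBlocks₁₁, toBlocks₂₁, one_apply]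
  calc A.det * N.toRows₂.det = A.det * (fromBlocks 1 N.toRows₁ 0 N.toRows₂).det := by
        rw [det_fromBlocks_zero₂₁, det_one, one_mul]
    _ = A.toBlocks₁₁.det * (A * N).toRows₂.det := by
        rw [← det_mul, hAC, hAN, det_fromBlocks_zero₁₂]

theorem associated_det_mul_det_submatrix {k l : ℕ} (F : Matrix (Fin (k + l)) (Fin (k + l)) R)
    (N : Matrix (Fin (k + l)) (Fin l) R) (hFN : F.submatrix (Fin.castAdd l) id * N = 0)
    (σ : Equiv.Perm (Fin (k + l))) :
    Associated (F.det * (N.submatrix (σ ∘ Fin.natAdd k) id).det)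
      ((F.submatrix (Fin.castAdd l) (σ ∘ Fin.castAdd l)).det *
        (F.submatrix (Fin.natAdd k) id * N).det) := by
  let e : Fin k ⊕ Fin l ≃ Fin (k + l) := finSumFinEquiv
  have hmul : F.submatrix e (σ ∘ e) * N.submatrix (σ ∘ e) id = (F * N).submatrix e id :=
    submatrix_mul_equiv F N e (e.trans σ) id
  have key := det_mul_det_toRows₂_of_toRows₁_mul_eq_zero (F.submatrix e (σ ∘ e))
    (N.submatrix (σ ∘ e) id) (by rw [hmul, ← hFN]; rfl)
  rw [hmul] at key
  have hA : (F.submatrix e (σ ∘ e)).det = Equiv.Perm.sign σ * F.det := by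
    rw [← det_permute', ← det_submatrix_equiv_self e]; rfl
  rw [hA] at key
  have hsign : IsUnit ((Equiv.Perm.sign σ : ℤ) : R) :=
    (Equiv.Perm.sign σ).isUnit.map (Int.castRingHom R)
  refine (associated_unit_mul_left _ _ hsign).symm.trans (Associated.of_eq ?_)
  rw [← mul_assoc]
  exact key

variable {n : Type*} [Fintype n] [DecidableEq n]

theorem natDegree_det_le_sum (M : Matrix n n R[X]) (t : n → ℕ)
    (h : ∀ i j, (M i j).natDegree ≤ t j) : M.det.natDegree ≤ ∑ j, t j := by
  rw [det_apply]
  refine natDegree_sum_le_of_forall_le _ _ fun σ _ => (natDegree_smul_le _ _).trans ?_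
  exact (natDegree_prod_le _ _).trans (Finset.sum_le_sum fun j _ => h (σ j) j)

theorem coeff_det_sum_of_natDegree_le (M : Matrix n n R[X]) (t : n → ℕ)
    (h : ∀ i j, (M i j).natDegree ≤ t j) :
    M.det.coeff (∑ j, t j) = (of fun i j => (M i j).coeff (t j)).det := by
  simp only [det_apply', finsetSum_coeff, coeff_intCast_mul, of_apply]
  refine Finset.sum_congr rfl fun σ _ => ?_
  rw [coeff_prod_sum_of_natDegree_le _ _ _ fun j _ => h (σ j) j]

theorem natDegree_det_eq_sum_of_natDegree_le (M : Matrix n n R[X]) (t : n → ℕ)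
    (h : ∀ i j, (M i j).natDegree ≤ t j) (hL : (of fun i j => (M i j).coeff (t j)).det ≠ 0) :
    M.det.natDegree = ∑ j, t j :=
  (natDegree_det_le_sum M t h).antisymm
    (le_natDegree_of_ne_zero (by rwa [coeff_det_sum_of_natDegree_le M t h]))

end Matrix

theorem dvd_of_forall_dvd_mul_of_span_eq_top {R ι : Type*} [CommSemiring R] [Fintype ι]
    {f : ι → R} {a b : R} (hf : Ideal.span (Set.range f) = ⊤) (h : ∀ i, a ∣ b * f i) : a ∣ b := by
  obtain ⟨c, hc⟩ := Ideal.mem_span_range_iff_exists_fun.1 (hf ▸ Submodule.mem_top (x := (1 : R)))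
  calc a ∣ ∑ i, c i * (b * f i) := Finset.dvd_sum fun i _ => (h i).mul_left (c i)
    _ = b * ∑ i, c i * f i := by rw [Finset.mul_sum]; exact Finset.sum_congr rfl fun i _ => by ring
    _ = b := by rw [hc, mul_one]

namespace IsKernelBasis

variable {K : Type*} [Field K] {m n k : ℕ} {F : Matrix (Fin m) (Fin n) K[X]}
  {N : Matrix (Fin n) (Fin k) K[X]}

theorem dvd_of_dvd_mulVec (hN : IsKernelBasis F N) {p : K[X]} (hp : p ≠ 0)
    {c : Fin k → K[X]} (hc : ∀ i, p ∣ (N *ᵥ c) i) (j : Fin k) : p ∣ c j := by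
  obtain ⟨hli, hFN, hgen⟩ := hN
  choose q hq using hc
  have hNc : N *ᵥ c = p • q := funext hq
  have hFq : F *ᵥ q = 0 := by
    have : p • (F *ᵥ q) = 0 := by
      rw [← mulVec_smul, ← hNc, mulVec_mulVec, hFN, zero_mulVec]
    exact (smul_eq_zero.1 this).resolve_left hp
  obtain ⟨c', rfl⟩ := hgen q hFq
  have : c = p • c' := mulVec_injective_iff.2 hli (by rw [hNc, mulVec_smul])
  exact ⟨c' j, by rw [this]; rfl⟩

theorem exists_det_submatrix_notMem (hN : IsKernelBasis F N) (𝔪 : Ideal K[X]) [h𝔪 : 𝔪.IsMaximal] :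
    ∃ r : Fin k ↪ Fin n, (N.submatrix r id).det ∉ 𝔪 := by
  obtain ⟨p, hp𝔪⟩ := (IsPrincipalIdealRing.principal 𝔪).principal
  have hmem : ∀ x, x ∈ 𝔪 ↔ p ∣ x := fun x => hp𝔪 ▸ Ideal.mem_span_singleton
  have hp : p ≠ 0 := by
    rintro rfl
    exact (Ideal.bot_lt_of_maximal 𝔪 (Polynomial.not_isField K)).ne' (by simpa using hp𝔪)
  let := Ideal.Quotient.field 𝔪
  let π := Ideal.Quotient.mk 𝔪
  have hli : LinearIndependent (K[X] ⧸ 𝔪) (N.map π)ᵀ := by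
    refine Fintype.linearIndependent_iff.2 fun g hg j => ?_
    choose c hc using fun i => Ideal.Quotient.mk_surjective (g i)
    have hdvd : ∀ i, p ∣ (N *ᵥ c) i := fun i => by
      rw [← hmem, ← Ideal.Quotient.eq_zero_iff_mem]
      have := congrFun hg i
      simpa [mulVec, dotProduct, map_sum, ← hc, mul_comm] using this
    rw [← hc, Ideal.Quotient.eq_zero_iff_mem, hmem]
    exact hN.dvd_of_dvd_mulVec hp hdvd j
  obtain ⟨r, hr⟩ := (N.map π).exists_det_submatrix_ne_zero hli
  refine ⟨r, fun hr𝔪 => hr ?_⟩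
  rw [submatrix_map]
  exact (π.map_det _).symm.trans (Ideal.Quotient.eq_zero_iff_mem.2 hr𝔪)

theorem span_det_submatrix_eq_top (hN : IsKernelBasis F N) :
    Ideal.span (Set.range fun r : Fin k ↪ Fin n => (N.submatrix r id).det) = ⊤ := by
  by_contra hne
  obtain ⟨𝔪, h𝔪, hle⟩ := Ideal.exists_le_maximal _ hne
  obtain ⟨r, hr⟩ := hN.exists_det_submatrix_notMem 𝔪
  exact hr (hle (Ideal.subset_span ⟨r, rfl⟩))

end IsKernelBasis

section ColumnDegrees

variable {K : Type*} [Field K]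

theorem degree_le_colDeg {m : ℕ} (v : Fin m → K[X]) (i : Fin m) : (v i).degree ≤ colDeg v :=
  Finset.le_sup (f := fun i => (v i).degree) (Finset.mem_univ i)

theorem degree_add_le_sColDeg {n : ℕ} (s : Fin n → ℕ) (v : Fin n → K[X]) (i : Fin n) :
    (v i).degree + s i ≤ sColDeg s v :=
  Finset.le_sup (f := fun i => (v i).degree + (s i : WithBot ℕ)) (Finset.mem_univ i)

theorem colDeg_mul_le_sColDeg {m n k : ℕ} {s : Fin n → ℕ} {A : Matrix (Fin m) (Fin n) K[X]}
    (hA : ∀ i j, (A i j).degree ≤ s j) (N : Matrix (Fin n) (Fin k) K[X]) (j : Fin k) :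
    colDeg ((A * N)ᵀ j) ≤ sColDeg s (Nᵀ j) := by
  refine Finset.sup_le fun i _ => ?_
  rw [transpose_apply, mul_apply]
  refine (degree_sum_le _ _).trans (Finset.sup_le fun l _ => ?_)
  calc (A i l * N l j).degree ≤ (A i l).degree + (N l j).degree := degree_mul_le _ _
    _ ≤ s l + (N l j).degree := add_le_add_left (hA i l) _
    _ = (N l j).degree + s l := add_comm _ _
    _ ≤ sColDeg s (Nᵀ j) := degree_add_le_sColDeg s (Nᵀ j) l

-- `unbotD 0` reads the `s`-degree of a zero column as `0`; the next two lemmas hold then as well.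
theorem natDegree_X_pow_mul_le_unbotD_sColDeg {n : ℕ} (s : Fin n → ℕ) (v : Fin n → K[X])
    (i : Fin n) : (X ^ s i * v i).natDegree ≤ (sColDeg s v).unbotD 0 := by
  by_cases hv : v i = 0
  · simp [hv]
  refine WithBot.le_unbotD ?_
  have h := degree_add_le_sColDeg s v i
  rw [degree_eq_natDegree hv] at h
  rw [natDegree_X_pow_mul (s i) hv, ← Nat.cast_withBot]
  exact_mod_cast h

theorem sLeadingCoeffMatrix_apply_eq_coeff {n k : ℕ} (s : Fin n → ℕ)
    (N : Matrix (Fin n) (Fin k) K[X]) (i : Fin n) (j : Fin k) :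
    sLeadingCoeffMatrix s N i j = (X ^ s i * N i j).coeff ((sColDeg s (Nᵀ j)).unbotD 0) := by
  by_cases h0 : N i j = 0
  · simp [sLeadingCoeffMatrix, h0]
  have h := degree_add_le_sColDeg s (Nᵀ j) i
  rw [transpose_apply, degree_eq_natDegree h0] at h
  simp only [sLeadingCoeffMatrix, degree_eq_natDegree h0, coeff_X_pow_mul']
  generalize sColDeg s (Nᵀ j) = D at h ⊢
  lift D to ℕ using ne_bot_of_le_ne_bot (by simp) h
  rw [← Nat.cast_withBot] at h ⊢
  have h' : (N i j).natDegree + s i ≤ D := by exact_mod_cast h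
  rw [show (D : WithBot ℕ).unbotD 0 = D from rfl]
  norm_cast
  split_ifs with hD hs
  · rw [show D - s i = (N i j).natDegree by omega, coeff_natDegree]
  · omega
  · exact (coeff_eq_zero_of_natDegree_lt (by omega)).symm
  · rfl

end ColumnDegrees

section Kernel

variable {K : Type*} [Field K] {k l : ℕ} {F : Matrix (Fin (k + l)) (Fin (k + l)) K[X]}
  {N : Matrix (Fin (k + l)) (Fin l) K[X]}

theorem IsKernelBasis.det_submatrix_natAdd_mul_dvd_det
    (hN : IsKernelBasis (F.submatrix (Fin.castAdd l) id) N) :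
    (F.submatrix (Fin.natAdd k) id * N).det ∣ F.det := by
  refine dvd_of_forall_dvd_mul_of_span_eq_top hN.span_det_submatrix_eq_top fun r => ?_
  obtain ⟨σ, hσ⟩ := Equiv.Perm.exists_extending_pair (Fin.natAdd k) r
    (Fin.natAdd_injective l k) r.injective
  have hσr : σ ∘ Fin.natAdd k = r := funext hσ
  rw [← hσr, (associated_det_mul_det_submatrix F N hN.2.1 σ).dvd_iff_dvd_right]
  exact dvd_mul_left _ _

theorem IsKernelBasis.natDegree_det_submatrix_le (hF : F.det ≠ 0) {s : Fin (k + l) → ℕ}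
    (hFdeg : ∀ i j, (F i j).natDegree ≤ s j)
    (hN : IsKernelBasis (F.submatrix (Fin.castAdd l) id) N) (σ : Equiv.Perm (Fin (k + l))) :
    (N.submatrix (σ ∘ Fin.natAdd k) id).det.natDegree ≤ ∑ i : Fin k, s (σ (Fin.castAdd l i)) := by
  set minor := (N.submatrix (σ ∘ Fin.natAdd k) id).det
  set A := F.submatrix (Fin.castAdd l) (σ ∘ Fin.castAdd l)
  set G := F.submatrix (Fin.natAdd k) id * N
  have hassoc : Associated (F.det * minor) (A.det * G.det) :=
    associated_det_mul_det_submatrix F N hN.2.1 σ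
  by_cases hminor : minor = 0
  · simp [hminor]
  have hAG : A.det * G.det ≠ 0 := hassoc.ne_zero_iff.1 (mul_ne_zero hF hminor)
  have hdeg := natDegree_eq_of_degree_eq (degree_eq_degree_of_associated hassoc)
  rw [natDegree_mul hF hminor, natDegree_mul (left_ne_zero_of_mul hAG)
    (right_ne_zero_of_mul hAG)] at hdeg
  have hG : G.det.natDegree ≤ F.det.natDegree :=
    natDegree_le_of_dvd hN.det_submatrix_natAdd_mul_dvd_det hF
  have hA : A.det.natDegree ≤ ∑ i : Fin k, s (σ (Fin.castAdd l i)) :=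
    natDegree_det_le_sum A _ fun i j => hFdeg _ _
  omega

theorem IsKernelBasis.sum_unbotD_sColDeg_le (hF : F.det ≠ 0) {s : Fin (k + l) → ℕ}
    (hFdeg : ∀ i j, (F i j).natDegree ≤ s j)
    (hN : IsKernelBasis (F.submatrix (Fin.castAdd l) id) N) (hred : IsSColumnReduced s N) :
    ∑ j, (sColDeg s (Nᵀ j)).unbotD 0 ≤ ∑ i, s i := by
  obtain ⟨r, hr⟩ := (sLeadingCoeffMatrix s N).exists_det_submatrix_ne_zero hred
  obtain ⟨σ, hσ⟩ := Equiv.Perm.exists_extending_pair (Fin.natAdd k) r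
    (Fin.natAdd_injective l k) r.injective
  have hσr : σ ∘ Fin.natAdd k = r := funext hσ
  -- `N_r` with its rows scaled by `X ^ s`: column degrees `≤ t`, leading coefficients `L_r`
  let M := diagonal (fun i => (X : K[X]) ^ s (r i)) * N.submatrix r id
  have hM : M.det.natDegree = ∑ j, (sColDeg s (Nᵀ j)).unbotD 0 := by
    refine natDegree_det_eq_sum_of_natDegree_le M _ (fun i j => ?_) ?_
    · simp only [M, diagonal_mul, submatrix_apply, id]
      exact natDegree_X_pow_mul_le_unbotD_sColDeg s (Nᵀ j) (r i)
    · convert hr using 2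
      ext i j
      simp only [M, of_apply, diagonal_mul, submatrix_apply, id]
      exact (sLeadingCoeffMatrix_apply_eq_coeff s N (r i) j).symm
  have hMdet : M.det = X ^ (∑ i, s (r i)) * (N.submatrix r id).det := by
    rw [det_mul, det_diagonal, Finset.prod_pow_eq_pow_sum]
  have hminor := hN.natDegree_det_submatrix_le hF hFdeg σ
  rw [hσr] at hminor
  have hsplit : ∑ i : Fin k, s (σ (Fin.castAdd l i)) + ∑ i, s (r i) = ∑ i, s i := by
    rw [← Equiv.sum_comp σ s, Fin.sum_univ_add]
    simp only [hσ]
  calc ∑ j, (sColDeg s (Nᵀ j)).unbotD 0 = M.det.natDegree := hM.symm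
    _ ≤ ∑ i, s (r i) + (N.submatrix r id).det.natDegree := by
        rw [hMdet]; exact (natDegree_mul_le).trans (by rw [natDegree_X_pow])
    _ ≤ ∑ i, s i := by omega

end Kernel

/-- Let `F` be nonsingular of size `(k+l) × (k+l)` with column
degrees `s`, partitioned as `F = [F_U; F_D]` with `F_U` the top `k` rows.  If `N`
is an `s`-minimal kernel basis of `F_U` and `G₂ = F_D * N`, then the sum of the
column degrees of `G₂` is at most `∑ s`. -/
theorem sum_column_degrees_second_diagonal_block_le
    {K : Type*} [Field K] {k l : ℕ}
    (F : Matrix (Fin (k + l)) (Fin (k + l)) K[X]) (hF : F.det ≠ 0)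
    (s : Fin (k + l) → ℕ)
    (hs : ∀ j, colDeg (Fᵀ j) = (s j : WithBot ℕ))
    (N : Matrix (Fin (k + l)) (Fin l) K[X])
    (hker : IsKernelBasis (F.submatrix (Fin.castAdd l) id) N)
    (hred : IsSColumnReduced s N) :
    ∑ j : Fin l, colDeg ((F.submatrix (Fin.natAdd k) id * N)ᵀ j) ≤
      ((∑ i, s i : ℕ) : WithBot ℕ) := by
  have hFdeg : ∀ i j, (F i j).degree ≤ s j := fun i j => hs j ▸ degree_le_colDeg (Fᵀ j) i
  have hsum := hker.sum_unbotD_sColDeg_le hF (fun i j => natDegree_le_iff_degree_le.2 (hFdeg i j))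
    hred
  calc ∑ j, colDeg ((F.submatrix (Fin.natAdd k) id * N)ᵀ j)
      ≤ ∑ j, (((sColDeg s (Nᵀ j)).unbotD 0 : ℕ) : WithBot ℕ) :=
        Finset.sum_le_sum fun j _ => (colDeg_mul_le_sColDeg (fun i m => hFdeg _ m) N j).trans
          (WithBot.le_coe_unbotD _ _)
    _ = ((∑ j, (sColDeg s (Nᵀ j)).unbotD 0 : ℕ) : WithBot ℕ) := (Nat.cast_sum _ _).symm
    _ ≤ ((∑ i, s i : ℕ) : WithBot ℕ) := by exact_mod_cast hsum
end

section
/- Let K be a field and F ∈ K[x]^{n×n} nonsingular. Suppose U = [U_L, U_R] ∈ K[x]^{n×n} is unimodular (U_L its first k columns) with F·U = G = [[G_1, 0], [*, G_2]] block lower triangular where G_1 is k×k, and let V = U^{-1} with V_U its top k rows. If U_L* ∈ K[x]^{n×k} is any matrix such that U* = [U_L*, U_R] is unimodular, then det F = det G · det(V_U · U_L*) / det(U*). -/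
/-!
Since `V * U = 1`, the columns `U_R` of `U*` are sent by `V` to the last `l` unit columns, so
`V * U* = [[V_U * U_L*, 0], [*, 1]]` and `det V * det U* = det (V_U * U_L*)`. Combined with
`det F = det (F * U) * det V`, this gives the formula.
-/

open Polynomial Matrix

namespace Matrix

theorem det_fromRows_mul_fromCols_of_mul_eq_zero_of_mul_eq_one {R m n ι : Type*} [CommRing R]
    [Fintype m] [Fintype n] [Fintype ι] [DecidableEq m] [DecidableEq n]
    (A₁ : Matrix m ι R) (A₂ : Matrix n ι R) (C : Matrix ι m R) (B : Matrix ι n R)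
    (h₁ : A₁ * B = 0) (h₂ : A₂ * B = 1) :
    (fromRows A₁ A₂ * fromCols C B).det = (A₁ * C).det := by
  rw [fromRows_mul_fromCols, h₁, h₂, det_fromBlocks_zero₁₂, det_one, mul_one]

theorem one_submatrix_castAdd_natAdd (R : Type*) [Zero R] [One R] (k l : ℕ) :
    (1 : Matrix (Fin (k + l)) (Fin (k + l)) R).submatrix (Fin.castAdd l) (Fin.natAdd k) = 0 := by
  ext i j
  simp only [submatrix_apply, one_apply, Fin.ext_iff, Fin.val_castAdd, Fin.val_natAdd, zero_apply]
  exact if_neg (by omega)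

theorem det_mul_det_fromCols_natAdd {R : Type*} [CommRing R] {k l : ℕ}
    (U V : Matrix (Fin (k + l)) (Fin (k + l)) R) (hVU : V * U = 1)
    (C : Matrix (Fin (k + l)) (Fin k) R) :
    V.det * ((fromCols C (U.submatrix id (Fin.natAdd k))).submatrix id finSumFinEquiv.symm).det =
      (V.submatrix (Fin.castAdd l) id * C).det := by
  have hzero : V.submatrix (Fin.castAdd l) id * U.submatrix id (Fin.natAdd k) = 0 := by
    rw [← submatrix_mul _ _ _ _ _ Function.bijective_id, hVU, one_submatrix_castAdd_natAdd]
  have hone : V.submatrix (Fin.natAdd k) id * U.submatrix id (Fin.natAdd k) = 1 := by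
    rw [← submatrix_mul _ _ _ _ _ Function.bijective_id, hVU,
      submatrix_one _ (Fin.natAdd_injective _ _)]
  have hrows : fromRows (V.submatrix (Fin.castAdd l) id) (V.submatrix (Fin.natAdd k) id) =
      V.submatrix finSumFinEquiv id := by
    ext (i | i) j <;> simp
  rw [← det_mul, ← det_submatrix_equiv_self finSumFinEquiv,
    submatrix_mul _ _ _ id _ Function.bijective_id, submatrix_submatrix, Equiv.symm_comp_self,
    Function.comp_id, submatrix_id_id, ← hrows,
    det_fromRows_mul_fromCols_of_mul_eq_zero_of_mul_eq_one _ _ _ _ hzero hone]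

end Matrix

theorem det_via_unimodular_completion_general
    {K : Type*} [Field K] {k l : ℕ}
    (F : Matrix (Fin (k + l)) (Fin (k + l)) K[X])
    (U : Matrix (Fin (k + l)) (Fin (k + l)) K[X])
    (V : Matrix (Fin (k + l)) (Fin (k + l)) K[X])
    (hV : U * V = 1 ∧ V * U = 1)
    (ULs : Matrix (Fin (k + l)) (Fin k) K[X])
    -- `U* = [U_L*, U_R]` as a square `(k+l) × (k+l)` matrix
    (Ustar : Matrix (Fin (k + l)) (Fin (k + l)) K[X])
    (hUstar : Ustar = (Matrix.fromCols ULs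
        (U.submatrix id (Fin.natAdd k))).submatrix id finSumFinEquiv.symm)
    (hUstarUni : ∃ c : K, c ≠ 0 ∧ Ustar.det = Polynomial.C c) :
    F.det = (F * U).det *
        (V.submatrix (Fin.castAdd l) id * ULs).det / Ustar.det := by
  obtain ⟨c, hc, hdet⟩ := hUstarUni
  have hUstar_ne : Ustar.det ≠ 0 := by rwa [hdet, Ne, C_eq_zero]
  have hUV : U.det * V.det = 1 := by rw [← det_mul, hV.1, det_one]
  rw [← det_mul_det_fromCols_natAdd U V hV.2, ← hUstar, ← mul_assoc,
    mul_div_cancel_right₀ _ hUstar_ne, det_mul, mul_assoc, hUV, mul_one]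

/-- Let `F` be nonsingular, `U = [U_L, U_R]` unimodular with
`F * U = G` block lower triangular (top-right `k × l` block zero), and
`V = U⁻¹` with top `k` rows `V_U`.  If `U_L*` is any matrix such that
`U* = [U_L*, U_R]` is unimodular, then
`det F = det G * det (V_U * U_L*) / det U*`. -/
theorem det_via_unimodular_completion
    {K : Type*} [Field K] {k l : ℕ}
    (F : Matrix (Fin (k + l)) (Fin (k + l)) K[X]) (hF : F.det ≠ 0)
    (U : Matrix (Fin (k + l)) (Fin (k + l)) K[X])
    (hU : ∃ c : K, c ≠ 0 ∧ U.det = Polynomial.C c)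
    (htri : (F * U).submatrix (Fin.castAdd l) (Fin.natAdd k) = 0)
    (V : Matrix (Fin (k + l)) (Fin (k + l)) K[X])
    (hV : U * V = 1 ∧ V * U = 1)
    (ULs : Matrix (Fin (k + l)) (Fin k) K[X])
    -- `U* = [U_L*, U_R]` as a square `(k+l) × (k+l)` matrix
    (Ustar : Matrix (Fin (k + l)) (Fin (k + l)) K[X])
    (hUstar : Ustar = (Matrix.fromCols ULs
        (U.submatrix id (Fin.natAdd k))).submatrix id finSumFinEquiv.symm)
    (hUstarUni : ∃ c : K, c ≠ 0 ∧ Ustar.det = Polynomial.C c) :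
    F.det = (F * U).det *
        (V.submatrix (Fin.castAdd l) id * ULs).det / Ustar.det :=
  det_via_unimodular_completion_general F U V hV ULs Ustar hUstar hUstarUni
end

section
/- Let K be a field and F ∈ K[x]^{n×n} nonsingular. Suppose U = [U_L, U_R] ∈ K[x]^{n×n} is unimodular with F·U = G = [[G_1, 0], [*, G_2]] block lower triangular where G_1 is k×k, and let V = U^{-1} with V_U its top k rows. Let u_R = U_R mod x ∈ K^{n×(n−k)} and v_U = V_U mod x ∈ K^{k×n} be the constant coefficient matrices. If u_L* ∈ K^{n×k} is any constant matrix such that u* = [u_L*, u_R] ∈ K^{n×n} is invertible, then det F = det G · det(v_U · u_L*) / det(u*). -/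
/-!
Evaluating `V * U = 1` at `x = 0` gives `v * u = 1` for `v = V(0)`, `u = U(0)`. Since the last
`l` columns of `u*` are those of `u`, the product `v * u*` is block lower triangular with diagonal
blocks `v_U * u_L*` and `1`, so `det (v_U * u_L*) * det u = det u*`. As `U` is unimodular,
`det u = det U`, and the right-hand side collapses to `det (F * U) / det U = det F`.
-/

open Polynomial Matrix

namespace Matrix

variable {m n ι R : Type*} [Fintype m] [Fintype n] [Fintype ι] [DecidableEq m] [DecidableEq n]
  [DecidableEq ι] [CommRing R]

theorem det_toRows₁_mul_mul_det_eq_det_fromCols {v u : Matrix (m ⊕ n) (m ⊕ n) R}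
    (h : v * u = 1) (L : Matrix (m ⊕ n) m R) :
    (v.toRows₁ * L).det * u.det = (fromCols L u.toCols₂).det := by
  have hblocks : v * fromCols L u.toCols₂ = fromBlocks (v.toRows₁ * L) 0 (v.toRows₂ * L) 1 := by
    rw [mul_fromCols, ← fromCols_fromRows_eq_fromBlocks, ← fromRows_mul, fromRows_toRows]
    congr 1
    ext i j
    have hij := congrFun (congrFun h i) (Sum.inr j)
    simp only [mul_apply, toCols₂_apply] at hij ⊢
    cases i <;> simpa [one_apply] using hij
  have hdet : (v.toRows₁ * L).det = v.det * (fromCols L u.toCols₂).det := by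
    rw [← det_mul, hblocks, det_fromBlocks_zero₁₂, det_one, mul_one]
  rw [hdet, mul_right_comm, ← det_mul, h, det_one, one_mul]

theorem det_submatrix_mul_mul_det_eq_det_fromCols {v u : Matrix ι ι R} (h : v * u = 1)
    (e : m ⊕ n ≃ ι) (L : Matrix ι m R) :
    (v.submatrix (e ∘ Sum.inl) id * L).det * u.det =
      ((fromCols L (u.submatrix id (e ∘ Sum.inr))).submatrix id e.symm).det := by
  have h' : v.submatrix e e * u.submatrix e e = 1 := by
    rw [submatrix_mul_equiv, h, submatrix_one_equiv]
  have key := det_toRows₁_mul_mul_det_eq_det_fromCols h' (L.submatrix e id)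
  have hrows : (v.submatrix e e).toRows₁ * L.submatrix e id = v.submatrix (e ∘ Sum.inl) id * L :=
    submatrix_mul_equiv v L _ e id
  have hcols : fromCols (L.submatrix e id) (u.submatrix e e).toCols₂ =
      ((fromCols L (u.submatrix id (e ∘ Sum.inr))).submatrix id e.symm).submatrix e e := by
    ext i (j | j) <;> simp
  rwa [hrows, det_submatrix_equiv_self, hcols, det_submatrix_equiv_self] at key

end Matrix

theorem det_via_constant_unimodular_completion_general
    {K : Type*} [Field K] {k l : ℕ}
    (F : Matrix (Fin (k + l)) (Fin (k + l)) K[X])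
    (U : Matrix (Fin (k + l)) (Fin (k + l)) K[X])
    (hU : ∃ c : K, c ≠ 0 ∧ U.det = Polynomial.C c)
    (V : Matrix (Fin (k + l)) (Fin (k + l)) K[X])
    (hV : U * V = 1 ∧ V * U = 1)
    (uLs : Matrix (Fin (k + l)) (Fin k) K)
    -- `u* = [u_L*, u_R]` as a square `(k+l) × (k+l)` constant matrix
    (ustar : Matrix (Fin (k + l)) (Fin (k + l)) K)
    (hustar : ustar = (Matrix.fromCols uLs
        ((U.submatrix id (Fin.natAdd k)).map (fun p => p.eval 0))).submatrix
          id finSumFinEquiv.symm)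
    (hinv : ustar.det ≠ 0) :
    F.det = (F * U).det *
        Polynomial.C
          ((((V.submatrix (Fin.castAdd l) id).map (fun p => p.eval 0)) * uLs).det /
            ustar.det) := by
  obtain ⟨c, hc, hdetU⟩ := hU
  let φ : K[X] →+* K := Polynomial.evalRingHom 0
  have hconst : (U.map φ).det = c := by
    rw [← RingHom.mapMatrix_apply, ← RingHom.map_det, hdetU, coe_evalRingHom, eval_C]
  have hvu : V.map φ * U.map φ = 1 := by
    rw [← Matrix.map_mul, hV.2, Matrix.map_one _ (map_zero φ) (map_one φ)]
  have key : (((V.submatrix (Fin.castAdd l) id).map (fun p => p.eval 0)) * uLs).det * c =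
      ustar.det := by
    rw [hustar, ← hconst]
    exact det_submatrix_mul_mul_det_eq_det_fromCols hvu finSumFinEquiv uLs
  rw [← key, div_mul_cancel_left₀ (left_ne_zero_of_mul (key ▸ hinv)), det_mul, hdetU, mul_assoc,
    ← C_mul, mul_inv_cancel₀ hc, C_1, mul_one]

/-- Let `F` be nonsingular, `U = [U_L, U_R]` unimodular with
`F * U = G` block lower triangular (top-right `k × l` block zero), and
`V = U⁻¹` with top `k` rows `V_U`.  Let `u_R = U_R mod x` and `v_U = V_U mod x`
be the constant coefficient matrices.  If `u_L*` is any constant matrix such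
that `u* = [u_L*, u_R]` is invertible over `K`, then
`det F = det G * det (v_U * u_L*) / det u*`. -/
theorem det_via_constant_unimodular_completion
    {K : Type*} [Field K] {k l : ℕ}
    (F : Matrix (Fin (k + l)) (Fin (k + l)) K[X]) (hF : F.det ≠ 0)
    (U : Matrix (Fin (k + l)) (Fin (k + l)) K[X])
    (hU : ∃ c : K, c ≠ 0 ∧ U.det = Polynomial.C c)
    (htri : (F * U).submatrix (Fin.castAdd l) (Fin.natAdd k) = 0)
    (V : Matrix (Fin (k + l)) (Fin (k + l)) K[X])
    (hV : U * V = 1 ∧ V * U = 1)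
    (uLs : Matrix (Fin (k + l)) (Fin k) K)
    -- `u* = [u_L*, u_R]` as a square `(k+l) × (k+l)` constant matrix
    (ustar : Matrix (Fin (k + l)) (Fin (k + l)) K)
    (hustar : ustar = (Matrix.fromCols uLs
        ((U.submatrix id (Fin.natAdd k)).map (fun p => p.eval 0))).submatrix
          id finSumFinEquiv.symm)
    (hinv : ustar.det ≠ 0) :
    F.det = (F * U).det *
        Polynomial.C
          ((((V.submatrix (Fin.castAdd l) id).map (fun p => p.eval 0)) * uLs).det /
            ustar.det) :=
  det_via_constant_unimodular_completion_general F U hU V hV uLs ustar hustar hinv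
end
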